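/- Completeness is not necessary for essential self-adjointness: on the half-line graph V = ℕ \ {0,1} with n ∼ n+1 and edge weight a_{n,n+1} = n^{2+ε} for fixed ε > 0, the edge lengths 1/√(a_{k,k+1}) = k^{−1−ε/2} of the path metric δ_a form a convergent series, so δ_a is bounded and the metric space (V, δ_a) is incomplete (not all balls are finite), yet Δ_{1,a} on C₀(V) is essentially self-adjoint. -/
import Mathlib


open Finset Filter

/-- Edge weight `a_{n,n+1} = n^{2+ε}` on the half-line `V = ℕ \ {0,1}`; the vertex
indexed by `i : ℕ` is `n = i + 2`, so the weight of the edge `{i, i+1}` is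
`(i+2)^{2+ε}`. -/
noncomputable def aPow (ε : ℝ) (i : ℕ) : ℝ := ((i : ℝ) + 2) ^ ((2 : ℝ) + ε)

/-- The Schrödinger (Laplacian) `Δ_{1,a}` on the half-line, in the coordinates
`i ↦ n = i+2`: the first vertex has a single neighbor. -/
noncomputable def lapHL (ε : ℝ) (v : ℕ → ℝ) : ℕ → ℝ
  | 0 => aPow ε 0 * (v 0 - v 1)
  | (i + 1) => aPow ε i * (v (i + 1) - v i) + aPow ε (i + 1) * (v (i + 1) - v (i + 2))

/-- The path metric `δ_a` between the vertices indexed by `i` and `j`. -/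
noncomputable def dHL (ε : ℝ) (i j : ℕ) : ℝ :=
  ∑ k ∈ Finset.Ico (min i j) (max i j), 1 / Real.sqrt (aPow ε k)

lemma aPow_pos (ε : ℝ) (i : ℕ) : 0 < aPow ε i :=
  Real.rpow_pos_of_pos (by positivity) _

lemma aux19 (ε : ℝ) (v : ℕ → ℝ) (hsum : Summable fun i => (v i) ^ 2)
    (hS : ∀ n, aPow ε n * (v (n + 1) - v n) = ∑ k ∈ Finset.range (n + 1), v k)
    (h0 : 0 < v 0) : False := by
  have key : ∀ n, v 0 ≤ v n ∧ 0 < ∑ k ∈ Finset.range (n + 1), v k := by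
    intro n
    induction n with
    | zero =>
      simp only [Nat.zero_add, zero_add, Finset.sum_range_one]
      exact ⟨le_refl _, h0⟩
    | succ n ih =>
      have ha := aPow_pos ε n
      have h1 : v (n + 1) = v n + (∑ k ∈ Finset.range (n + 1), v k) / aPow ε n := by
        have := hS n
        field_simp
        linarith
      have hv : v 0 ≤ v (n + 1) := by
        rw [h1]
        have := div_pos ih.2 ha
        linarith [ih.1]
      refine ⟨hv, ?_⟩
      rw [Finset.sum_range_succ]
      have : 0 < v (n + 1) := lt_of_lt_of_le h0 hv
      linarith [ih.2]
  have hlim : Filter.Tendsto (fun i => (v i) ^ 2) atTop (nhds 0) :=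
    hsum.tendsto_atTop_zero
  have hev : ∀ᶠ i in atTop, (v i) ^ 2 < (v 0) ^ 2 :=
    hlim.eventually (gt_mem_nhds (by positivity))
  obtain ⟨i, hi⟩ := hev.exists
  have : (v 0) ^ 2 ≤ (v i) ^ 2 := pow_le_pow_left₀ h0.le (key i).1 2
  linarith

/-- with `a_{n,n+1} = n^{2+ε}` the edge lengths `1/√(a_{k,k+1})` form a
convergent series, so `δ_a` is bounded and the metric space `(V, δ_a)` is incomplete
(there is a Cauchy sequence with no limit), yet `Δ_{1,a}` is essentially self-adjoint
on `C₀(V)`: the only `ℓ²` solution of `Δ_{1,a} v + v = 0` is `v ≡ 0`. -/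
theorem stmt19 (ε : ℝ) (hε : 0 < ε) :
    (Summable fun k : ℕ => 1 / Real.sqrt (aPow ε k)) ∧
    (∃ u : ℕ → ℕ,
      (∀ δ : ℝ, 0 < δ → ∃ N : ℕ, ∀ m ≥ N, ∀ n ≥ N, dHL ε (u m) (u n) < δ) ∧
      ¬ ∃ x : ℕ, ∀ δ : ℝ, 0 < δ → ∃ N : ℕ, ∀ n ≥ N, dHL ε (u n) x < δ) ∧
    ∀ v : ℕ → ℝ, Summable (fun i => (v i) ^ 2) →
      (∀ i, lapHL ε v i + v i = 0) → v = 0 := by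
  set f : ℕ → ℝ := fun k => 1 / Real.sqrt (aPow ε k) with hfdef
  have hf0 : ∀ k, 0 ≤ f k := fun k => by positivity
  have hfpos : ∀ k, 0 < f k := fun k =>
    one_div_pos.mpr (Real.sqrt_pos.mpr (aPow_pos ε k))
  -- Part 1: summability
  have h1 : Summable f := by
    have hp : (-(1 + ε / 2) : ℝ) < -1 := by linarith
    have hs : Summable fun n : ℕ => (n : ℝ) ^ (-(1 + ε / 2)) :=
      Real.summable_nat_rpow.mpr hp
    have hs2 : Summable fun n : ℕ => ((n + 2 : ℕ) : ℝ) ^ (-(1 + ε / 2)) :=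
      (summable_nat_add_iff 2).mpr hs
    refine hs2.congr fun k => ?_
    have hx : (0 : ℝ) < (k : ℝ) + 2 := by positivity
    have e0 : ((k + 2 : ℕ) : ℝ) = (k : ℝ) + 2 := by push_cast; ring
    have e1 : Real.sqrt (aPow ε k) = ((k : ℝ) + 2) ^ ((1 : ℝ) + ε / 2) := by
      rw [aPow, Real.sqrt_eq_rpow, ← Real.rpow_mul hx.le]
      congr 1
      ring
    show ((k + 2 : ℕ) : ℝ) ^ (-(1 + ε / 2)) = f k
    rw [hfdef]
    simp only
    rw [e1, e0, Real.rpow_neg hx.le, one_div]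
  refine ⟨h1, ⟨fun n => n, ?_, ?_⟩, ?_⟩
  -- Cauchy sequence
  · have hs : CauchySeq (fun n => ∑ k ∈ Finset.range n, f k) :=
      h1.hasSum.tendsto_sum_nat.cauchySeq
    intro δ hδ
    obtain ⟨N, hN⟩ := Metric.cauchySeq_iff.mp hs δ hδ
    refine ⟨N, fun m hm n hn => ?_⟩
    have hmin : N ≤ min m n := le_min hm hn
    have hmax : N ≤ max m n := le_trans hm (le_max_left _ _)
    have hd : dHL ε m n =
        ∑ k ∈ Finset.range (max m n), f k - ∑ k ∈ Finset.range (min m n), f k := by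
      rw [dHL, Finset.sum_Ico_eq_sub _ min_le_max]
    have h2 := hN (max m n) hmax (min m n) hmin
    rw [Real.dist_eq] at h2
    calc dHL ε m n
        = ∑ k ∈ Finset.range (max m n), f k - ∑ k ∈ Finset.range (min m n), f k := hd
      _ ≤ |∑ k ∈ Finset.range (max m n), f k - ∑ k ∈ Finset.range (min m n), f k| :=
          le_abs_self _
      _ < δ := h2
  -- no limit
  · rintro ⟨x, hx⟩
    obtain ⟨N, hN⟩ := hx (f x) (hfpos x)
    set n := max N (x + 1) with hn
    have h1n := hN n (le_max_left _ _)
    have hxn : x < n := lt_of_lt_of_le (Nat.lt_succ_self x) (le_max_right _ _)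
    have hd : dHL ε n x = ∑ k ∈ Finset.Ico x n, f k := by
      rw [dHL, min_eq_right hxn.le, max_eq_left hxn.le]
    have hge : f x ≤ ∑ k ∈ Finset.Ico x n, f k :=
      Finset.single_le_sum (fun k _ => hf0 k)
        (Finset.mem_Ico.mpr ⟨le_refl x, hxn⟩)
    rw [hd] at h1n
    linarith
  -- essential self-adjointness part
  · intro v hsum hv
    have hS : ∀ n, aPow ε n * (v (n + 1) - v n) = ∑ k ∈ Finset.range (n + 1), v k := by
      intro n
      induction n with
      | zero =>
        have h := hv 0
        simp only [lapHL] at h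
        simp only [Nat.zero_add, zero_add, Finset.sum_range_one]
        linear_combination -h
      | succ n ih =>
        have h := hv (n + 1)
        simp only [lapHL] at h
        rw [Finset.sum_range_succ]
        linear_combination ih - h
    rcases lt_trichotomy (v 0) 0 with hneg | hzero | hpos
    · exfalso
      apply aux19 ε (fun i => -v i)
      · simpa using hsum
      · intro n
        have h := hS n
        show aPow ε n * (-v (n + 1) - -v n) = ∑ k ∈ Finset.range (n + 1), -v k
        rw [Finset.sum_neg_distrib]
        linear_combination -h
      · simpa using hneg
    · funext i
      have key : ∀ n, v n = 0 ∧ (∑ k ∈ Finset.range (n + 1), v k) = 0 := by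
        intro n
        induction n with
        | zero =>
          simp only [Nat.zero_add, zero_add, Finset.sum_range_one]
          exact ⟨hzero, hzero⟩
        | succ n ih =>
          have h := hS n
          rw [ih.2] at h
          have ha := (aPow_pos ε n).ne'
          have hv1 : v (n + 1) = 0 := by
            have : v (n + 1) - v n = 0 := by
              rcases mul_eq_zero.mp h with h' | h'
              · exact absurd h' ha
              · exact h'
            rw [ih.1] at this
            linarith
          refine ⟨hv1, ?_⟩
          rw [Finset.sum_range_succ, ih.2, hv1, add_zero]
      exact (key i).1
    · exact (aux19 ε v hsum hS hpos).elim
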